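/- Let n ≥ 2 and let q_1, …, q_s be real quadratic forms on ℝ^{n+1}, with projective zero sets Z(q_i) = {[x] ∈ ℝP^n : q_i(x) = 0}, and let Γ = Z(q_1) ∪ ⋯ ∪ Z(q_s). Let H be the graph with vertex set I = {i ∈ {1,…,s} : Z(q_i) ≠ ∅} and an edge between distinct i, j ∈ I if and only if Z(q_i) ∩ Z(q_j) ≠ ∅. Then the number of connected components of the topological space Γ equals the number of connected components of the graph H. -/

import Mathlib

noncomputable section

/-- The quotient topology on a projectivization. -/
instance {K V : Type*} [DivisionRing K] [AddCommGroup V] [Module K V] [TopologicalSpace V] :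
    TopologicalSpace (Projectivization K V) :=
  instTopologicalSpaceQuotient

/-- The projective zero set `{[x] ∈ ℝPⁿ : q x = 0}` of a real quadratic form `q` on
`ℝ^{n+1}`. -/
def projZeroSet {n : ℕ} (q : QuadraticForm ℝ (Fin (n + 1) → ℝ)) :
    Set (Projectivization ℝ (Fin (n + 1) → ℝ)) :=
  {p | q p.rep = 0}

/-!
A nonempty quadric `Z(q) ⊆ ℝPⁿ`, `n ≥ 2`, is closed and path connected. Two of its points
`[x] ≠ [y]` are joined by the segment `[x, y]` if `polar q x y = 0`. Otherwise, as `n + 1 ≥ 3`,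
some `w ∉ span {x, y}` is `q`-orthogonal to `x` and `y`: if `q w = 0` then `[x]` and `[y]` are
joined through `[w]` by segments, and if not, `(1 - t)² x + μ t² y + t (1 - t) w` with
`μ = -q w / polar q x y` is isotropic for all `t`.

For a finite family of closed preconnected sets, sending a point of the union to the component of
the intersection graph of any member containing it is locally constant, since its fibres are
finite unions of members; it thus identifies the connected components of the union with those of
the graph.
-/

open Module Projectivization QuadraticMap Set Submodule
open scoped LinearAlgebra.Projectivization

theorem IsLocallyConstant.of_isClosed_fiber {X Y : Type*} [TopologicalSpace X] [Finite Y]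
    {f : X → Y} (hf : ∀ y, IsClosed (f ⁻¹' {y})) : IsLocallyConstant f := by
  refine IsLocallyConstant.iff_isOpen_fiber.2 fun y ↦ ?_
  rw [← isClosed_compl_iff, ← preimage_compl, ← biUnion_of_singleton {y}ᶜ, preimage_iUnion₂]
  exact ({y}ᶜ : Set Y).toFinite.isClosed_biUnion fun y' _ ↦ hf y'

theorem ConnectedComponents.mk_eq_mk_of_isPreconnected {X : Type*} [TopologicalSpace X]
    {Y s : Set X} (hs : IsPreconnected s) (hsY : s ⊆ Y) {x y : Y} (hx : x.1 ∈ s) (hy : y.1 ∈ s) :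
    ConnectedComponents.mk x = ConnectedComponents.mk y := by
  have hs' : IsPreconnected (Subtype.val ⁻¹' s : Set Y) := by
    rwa [← Topology.IsInducing.subtypeVal.isPreconnected_image, image_preimage_eq_inter_range,
      Subtype.range_val, inter_eq_left.2 hsY]
  exact coe_eq_coe.2 (connectedComponent_eq (hs'.subset_connectedComponent hx hy))

section IntersectionGraph

variable {X ι : Type*} (Z : ι → Set X)

def intersectionGraph : SimpleGraph {i // (Z i).Nonempty} :=
  SimpleGraph.fromRel fun i j ↦ (Z i ∩ Z j).Nonempty

variable {Z}

theorem intersectionGraph_reachable_of_mem {i j : ι} {x : X} (hi : x ∈ Z i) (hj : x ∈ Z j) :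
    (intersectionGraph Z).Reachable ⟨i, x, hi⟩ ⟨j, x, hj⟩ := by
  by_cases hij : i = j
  · subst hij
    rfl
  · exact SimpleGraph.Adj.reachable ⟨fun h ↦ hij (congrArg Subtype.val h), Or.inl ⟨x, hi, hj⟩⟩

def intersectionGraphComponent (x : ⋃ i, Z i) :
    (intersectionGraph Z).ConnectedComponent :=
  let hx := mem_iUnion.1 x.2
  (intersectionGraph Z).connectedComponentMk ⟨hx.choose, x, hx.choose_spec⟩

theorem intersectionGraphComponent_eq {x : ⋃ i, Z i} {i : ι} (hi : x.1 ∈ Z i) :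
    intersectionGraphComponent x = (intersectionGraph Z).connectedComponentMk ⟨i, x, hi⟩ :=
  SimpleGraph.ConnectedComponent.sound
    (intersectionGraph_reachable_of_mem (mem_iUnion.1 x.2).choose_spec hi)

variable [TopologicalSpace X]

theorem ConnectedComponents.mk_eq_of_intersectionGraph_reachable (hZ : ∀ i, IsPreconnected (Z i))
    {u v : {i // (Z i).Nonempty}} (huv : (intersectionGraph Z).Reachable u v)
    {x y : ⋃ i, Z i} (hx : x.1 ∈ Z u) (hy : y.1 ∈ Z v) :
    ConnectedComponents.mk x = ConnectedComponents.mk y := by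
  obtain ⟨walk⟩ := huv
  induction walk generalizing x with
  | nil => exact mk_eq_mk_of_isPreconnected (hZ _) (subset_iUnion Z _) hx hy
  | cons hadj _ ih =>
    obtain ⟨z, hz, hz'⟩ : (Z _ ∩ Z _).Nonempty := by
      rcases hadj.2 with h | ⟨z, hz', hz⟩
      exacts [h, ⟨z, hz, hz'⟩]
    let z' : ⋃ i, Z i := ⟨z, mem_iUnion_of_mem _ hz⟩
    exact (mk_eq_mk_of_isPreconnected (hZ _) (subset_iUnion Z _) hx (y := z') hz).trans
      (ih (x := z') hz' hy)

theorem isLocallyConstant_intersectionGraphComponent [Finite ι] (hZ : ∀ i, IsClosed (Z i)) :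
    IsLocallyConstant (intersectionGraphComponent (Z := Z)) := by
  refine IsLocallyConstant.of_isClosed_fiber fun C ↦ ?_
  have : intersectionGraphComponent ⁻¹' {C} = Subtype.val ⁻¹'
      ⋃ v : {v : {i // (Z i).Nonempty} // (intersectionGraph Z).connectedComponentMk v = C},
        Z v.1.1 := by
    ext x
    simp only [mem_preimage, mem_singleton_iff, mem_iUnion]
    constructor
    · rintro rfl
      exact ⟨⟨_, rfl⟩, (mem_iUnion.1 x.2).choose_spec⟩
    · rintro ⟨⟨v, rfl⟩, hv⟩
      exact intersectionGraphComponent_eq hv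
  rw [this]
  exact (isClosed_iUnion_of_finite fun _ ↦ hZ _).preimage continuous_subtype_val

def connectedComponentsIUnionEquiv [Finite ι] (hZc : ∀ i, IsClosed (Z i))
    (hZp : ∀ i, IsPreconnected (Z i)) :
    ConnectedComponents (⋃ i, Z i) ≃ (intersectionGraph Z).ConnectedComponent where
  toFun := Quotient.lift intersectionGraphComponent fun x y hxy ↦
    (isLocallyConstant_intersectionGraphComponent hZc).apply_eq_of_isPreconnected
      isPreconnected_connectedComponent mem_connectedComponent
      (hxy ▸ mem_connectedComponent)
  invFun := SimpleGraph.ConnectedComponent.lift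
    (fun v ↦ ConnectedComponents.mk ⟨v.2.some, mem_iUnion_of_mem _ v.2.some_mem⟩)
    fun _ _ walk _ ↦ ConnectedComponents.mk_eq_of_intersectionGraph_reachable hZp walk.reachable
      (Set.Nonempty.some_mem _) (Set.Nonempty.some_mem _)
  left_inv := by
    rintro ⟨x⟩
    obtain ⟨i, hi⟩ := mem_iUnion.1 x.2
    change SimpleGraph.ConnectedComponent.lift _ _ (intersectionGraphComponent x) = _
    rw [intersectionGraphComponent_eq hi]
    exact ConnectedComponents.mk_eq_mk_of_isPreconnected (hZp i) (subset_iUnion Z i)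
      (Set.Nonempty.some_mem _) hi
  right_inv := by
    rintro ⟨v⟩
    exact intersectionGraphComponent_eq v.2.some_mem

end IntersectionGraph

namespace QuadraticMap

section CommRing

variable {R M : Type*} [CommRing R] [AddCommGroup M] [Module R M]

theorem apply_smul_add_smul_add_smul (Q : QuadraticForm R M) (x y w : M) (a b c : R) :
    Q (a • x + b • y + c • w) = a * a * Q x + b * b * Q y + c * c * Q w
      + a * b * polar Q x y + a * c * polar Q x w + b * c * polar Q y w := by
  rw [QuadraticMap.map_add (⇑Q), QuadraticMap.map_add (⇑Q), polar_add_left]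
  simp only [QuadraticMap.map_smul, polar_smul_left, polar_smul_right, smul_eq_mul]
  ring

end CommRing

variable {K V : Type*} [Field K] [AddCommGroup V] [Module K V]

theorem exists_notMem_span_pair_polar_eq_zero [FiniteDimensional K V] (hV : 2 < finrank K V)
    (Q : QuadraticForm K V) {x y : V} (hx : Q x = 0) (hy : Q y = 0) (hxy : polar Q x y ≠ 0) :
    ∃ w ∉ span K {x, y}, polar Q x w = 0 ∧ polar Q y w = 0 := by
  set L : V →ₗ[K] K × K := (polarBilin Q x).prod (polarBilin Q y)
  have hker : LinearMap.ker L ≠ ⊥ := by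
    intro h
    have hsum := L.finrank_range_add_finrank_ker
    have hrange := (LinearMap.range L).finrank_le
    rw [h, finrank_bot] at hsum
    rw [finrank_prod, finrank_self] at hrange
    omega
  obtain ⟨w, hwL, hw0⟩ := exists_mem_ne_zero_of_ne_bot hker
  have hpolar : polar Q x w = 0 ∧ polar Q y w = 0 := Prod.mk_eq_zero.1 hwL
  refine ⟨w, fun hw ↦ hw0 ?_, hpolar⟩
  obtain ⟨a, b, rfl⟩ := mem_span_pair.1 hw
  have hxx : polar Q x x = 0 := by simp [polar_self, hx]
  have hyy : polar Q y y = 0 := by simp [polar_self, hy]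
  simp only [polar_add_right, polar_smul_right, hxx, hyy, polar_comm Q y x, smul_eq_mul, mul_zero,
    zero_add, add_zero] at hpolar
  obtain ⟨hb, ha⟩ := hpolar
  simp [(mul_eq_zero.1 ha).resolve_right hxy, (mul_eq_zero.1 hb).resolve_right hxy]

end QuadraticMap

theorem QuadraticForm.continuous_of_finiteDimensional {V : Type*} [NormedAddCommGroup V]
    [NormedSpace ℝ V] [FiniteDimensional ℝ V] (q : QuadraticForm ℝ V) : Continuous q := by
  have h := (associated (R := ℝ) q).toContinuousBilinearMap.continuous₂.comp
    (continuous_id.prodMk continuous_id)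
  convert h using 1
  ext x
  exact (associated_eq_self_apply ℝ q x).symm

section ProjectiveQuadric

variable {n : ℕ} (q : QuadraticForm ℝ (Fin (n + 1) → ℝ))

theorem mem_projZeroSet_mk {v : Fin (n + 1) → ℝ} (hv : v ≠ 0) :
    mk ℝ v hv ∈ projZeroSet q ↔ q v = 0 := by
  obtain ⟨a, ha⟩ := exists_smul_eq_mk_rep ℝ v hv
  simp [projZeroSet, ← ha, Units.smul_def, QuadraticMap.map_smul]

theorem isClosed_projZeroSet : IsClosed (projZeroSet q) := by
  have hmk : Topology.IsQuotientMap fun v : {v : Fin (n + 1) → ℝ // v ≠ 0} ↦ mk ℝ v.1 v.2 :=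
    isQuotientMap_quotient_mk'
  rw [← hmk.isClosed_preimage]
  convert (isClosed_singleton (x := (0 : ℝ))).preimage
    ((QuadraticForm.continuous_of_finiteDimensional q).comp continuous_subtype_val)
  ext v
  exact mem_projZeroSet_mk q v.2

variable {q}

theorem joinedIn_projZeroSet_of_path {x y : Fin (n + 1) → ℝ} (γ : Path x y)
    (hγ : ∀ t, γ t ≠ 0) (hqγ : ∀ t, q (γ t) = 0) :
    JoinedIn (projZeroSet q) (mk ℝ x (γ.source ▸ hγ 0)) (mk ℝ y (γ.target ▸ hγ 1)) := by
  refine ⟨⟨⟨fun t ↦ mk ℝ (γ t) (hγ t), continuous_quotient_mk'.comp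
    (γ.continuous.subtype_mk _)⟩, by simp, by simp⟩, fun t ↦ (mem_projZeroSet_mk q _).2 (hqγ t)⟩

theorem joinedIn_projZeroSet_of_conic {x y w : Fin (n + 1) → ℝ} {μ : ℝ} (hμ : μ ≠ 0)
    (hxy : LinearIndependent ℝ ![x, y]) (hw : w ∈ span ℝ {x, y} → w = 0)
    (hqx : q x = 0) (hqy : q y = 0) (hxw : polar q x w = 0) (hyw : polar q y w = 0)
    (hqw : q w + μ * polar q x y = 0) :
    JoinedIn (projZeroSet q) (mk ℝ x (hxy.ne_zero 0)) (mk ℝ y (hxy.ne_zero 1)) := by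
  have hcoeff : ∀ a b c : ℝ, a • x + b • y + c • w = 0 → a = 0 ∧ b = 0 := by
    intro a b c h
    have hcw : c • w = 0 := disjoint_def.1 (disjoint_span_singleton.2 hw).symm (c • w)
      (mem_span_singleton.2 ⟨c, rfl⟩) (by
        rw [eq_neg_of_add_eq_zero_right h]
        exact neg_mem (add_mem (smul_mem _ _ (subset_span (by simp)))
          (smul_mem _ _ (subset_span (by simp)))))
    rw [hcw, add_zero] at h
    exact LinearIndependent.pair_iff.1 hxy a b h
  let γ : Path x (μ • y) :=
    { toFun t := ((1 - t : ℝ) ^ 2) • x + (μ * (t : ℝ) ^ 2) • y + ((t : ℝ) * (1 - t)) • w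
      continuous_toFun := by fun_prop
      source' := by simp
      target' := by simp }
  have hγ : ∀ t, γ t ≠ 0 := fun t ht ↦ by
    obtain ⟨h1, h2⟩ := hcoeff _ _ _ ht
    have : (t : ℝ) = 1 := by nlinarith
    simp [this, hμ] at h2
  have hqγ : ∀ t, q (γ t) = 0 := fun t ↦ by
    change q (_ • x + _ • y + _ • w) = 0
    rw [QuadraticMap.apply_smul_add_smul_add_smul, hqx, hqy, hxw, hyw]
    linear_combination ((t : ℝ) ^ 2 * (1 - t) ^ 2) * hqw
  convert joinedIn_projZeroSet_of_path γ hγ hqγ using 1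
  exact (mk_eq_mk_iff' ℝ _ _ _ _).2 ⟨μ⁻¹, inv_smul_smul₀ hμ y⟩

theorem joinedIn_projZeroSet (hn : 2 ≤ n) {p p' : ℙ ℝ (Fin (n + 1) → ℝ)}
    (hp : p ∈ projZeroSet q) (hp' : p' ∈ projZeroSet q) : JoinedIn (projZeroSet q) p p' := by
  rcases eq_or_ne p p' with rfl | hne
  · exact JoinedIn.refl hp
  have hxy := linearIndependent_pair_iff_ne.2 hne
  rw [← mk_rep p, ← mk_rep p']
  set x := p.rep
  set y := p'.rep
  by_cases hβ : polar q x y = 0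
  · exact joinedIn_projZeroSet_of_conic one_ne_zero hxy (fun _ ↦ rfl) hp hp' (by simp) (by simp)
      (by simp [hβ])
  have hV : 2 < finrank ℝ (Fin (n + 1) → ℝ) := by rw [finrank_fin_fun]; omega
  obtain ⟨w, hw, hxw, hyw⟩ := exists_notMem_span_pair_polar_eq_zero hV q hp hp' hβ
  by_cases hqw : q w = 0
  · have hxw' : LinearIndependent ℝ ![x, w] :=
      (LinearIndependent.pair_iff' p.rep_nonzero).2 fun a h ↦
        hw (h ▸ smul_mem _ _ (subset_span (by simp)))
    have hwy : LinearIndependent ℝ ![w, y] :=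
      LinearIndependent.pair_symm_iff.1 <| (LinearIndependent.pair_iff' p'.rep_nonzero).2
        fun a h ↦ hw (h ▸ smul_mem _ _ (subset_span (by simp)))
    exact (joinedIn_projZeroSet_of_conic one_ne_zero hxw' (fun _ ↦ rfl) hp hqw (by simp)
      (by simp) (by simpa using hxw)).trans
      (joinedIn_projZeroSet_of_conic one_ne_zero hwy (fun _ ↦ rfl) hqw hp' (by simp)
      (by simp) (by simpa [polar_comm q w y] using hyw))
  · exact joinedIn_projZeroSet_of_conic (div_ne_zero (neg_ne_zero.2 hqw) hβ) hxy
      (fun h ↦ absurd h hw) hp hp' hxw hyw (by field_simp; ring)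

theorem isPreconnected_projZeroSet (hn : 2 ≤ n) : IsPreconnected (projZeroSet q) := by
  rcases (projZeroSet q).eq_empty_or_nonempty with h | h
  · exact h ▸ isPreconnected_empty
  exact (isPathConnected_iff.2 ⟨h, fun _ hp _ hp' ↦ joinedIn_projZeroSet hn hp hp'⟩)
    |>.isConnected.isPreconnected

end ProjectiveQuadric

/-- Let `n ≥ 2`, let `q_1, …, q_s` be real quadratic forms on `ℝ^{n+1}` and let
`Γ = Z(q_1) ∪ ⋯ ∪ Z(q_s) ⊆ ℝPⁿ`. Let `H` be the graph whose vertices are the indices `i`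
with `Z(q_i) ≠ ∅` and with an edge between distinct `i, j` iff `Z(q_i) ∩ Z(q_j) ≠ ∅`.
Then the number of connected components of `Γ` equals the number of connected components
of `H`. -/
theorem quadric_arrangement_components_eq_graph_components (n : ℕ) (hn : 2 ≤ n)
    (s : ℕ) (q : Fin s → QuadraticForm ℝ (Fin (n + 1) → ℝ)) :
    Nat.card (ConnectedComponents
        ((⋃ i, projZeroSet (q i)) : Set (Projectivization ℝ (Fin (n + 1) → ℝ)))) =
      Nat.card (SimpleGraph.fromRel
        (fun i j : {i : Fin s // (projZeroSet (q i)).Nonempty} =>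
          (projZeroSet (q i.1) ∩ projZeroSet (q j.1)).Nonempty)).ConnectedComponent :=
  Nat.card_congr <| connectedComponentsIUnionEquiv (fun i ↦ isClosed_projZeroSet (q i))
    fun _ ↦ isPreconnected_projZeroSet hn
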